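/- arXiv:2304.10411 — 3 statements merged into one kernel-verified Lean document; each statement's English description precedes it below -/
import Mathlib

section
/- For any vectors u, v ∈ ℝ^n with ‖u − v‖_∞ ≤ 0.01, one has ‖exp(u) − exp(v)‖_2 ≤ 2 ‖exp(u)‖_2 · ‖u − v‖_∞, where exp is applied entrywise. -/
/-- The Euclidean (ℓ2) norm of a vector in ℝ^n. -/
noncomputable def l2norm {n : ℕ} (u : Fin n → ℝ) : ℝ := Real.sqrt (∑ i, u i ^ 2)

/-- The supremum (ℓ∞) norm of a vector in ℝ^n. -/
noncomputable def linfNorm {n : ℕ} (u : Fin n → ℝ) : ℝ := ⨆ i, |u i|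

theorem stmt_1 {n : ℕ} (u v : Fin n → ℝ) (h : linfNorm (u - v) ≤ 0.01) :
    l2norm ((fun i => Real.exp (u i)) - fun i => Real.exp (v i)) ≤
      2 * l2norm (fun i => Real.exp (u i)) * linfNorm (u - v) := by
  set M := linfNorm (u - v) with hMdef
  have hM0 : 0 ≤ M := by
    rcases isEmpty_or_nonempty (Fin n) with h0 | h0
    · simp [hMdef, linfNorm, Real.iSup_of_isEmpty]
    · exact le_ciSup_of_le (Set.Finite.bddAbove (Set.finite_range _))
        (Classical.arbitrary _) (abs_nonneg _)
  have hbound : ∀ i, |Real.exp (u i) - Real.exp (v i)| ≤ 2 * M * Real.exp (u i) := by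
    intro i
    have hle : |u i - v i| ≤ M := by
      have := le_ciSup (f := fun i => |(u - v) i|)
        (Set.Finite.bddAbove (Set.finite_range _)) i
      simpa [hMdef, linfNorm] using this
    have h1 : |v i - u i| ≤ 1 := by
      rw [abs_sub_comm]
      have : (0.01 : ℝ) ≤ 1 := by norm_num
      linarith
    have hexp := Real.abs_exp_sub_one_le h1
    have harg : u i + (v i - u i) = v i := by ring
    calc |Real.exp (u i) - Real.exp (v i)|
        = Real.exp (u i) * |Real.exp (v i - u i) - 1| := by
          rw [show Real.exp (u i) * |Real.exp (v i - u i) - 1|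
              = |Real.exp (u i) * (Real.exp (v i - u i) - 1)| by
            rw [abs_mul, abs_of_pos (Real.exp_pos (u i))]]
          rw [mul_sub, mul_one, ← Real.exp_add, harg, abs_sub_comm]
      _ ≤ Real.exp (u i) * (2 * |v i - u i|) :=
          mul_le_mul_of_nonneg_left hexp (Real.exp_pos _).le
      _ ≤ 2 * M * Real.exp (u i) := by
          rw [abs_sub_comm]
          nlinarith [Real.exp_pos (u i)]
  simp only [l2norm, Pi.sub_apply]
  have hsum : ∑ i, (Real.exp (u i) - Real.exp (v i)) ^ 2
      ≤ ∑ i, (2 * M * Real.exp (u i)) ^ 2 := by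
    refine Finset.sum_le_sum fun i _ => ?_
    have := hbound i
    nlinarith [abs_nonneg (Real.exp (u i) - Real.exp (v i)),
      sq_abs (Real.exp (u i) - Real.exp (v i)), Real.exp_pos (u i)]
  calc Real.sqrt (∑ i, (Real.exp (u i) - Real.exp (v i)) ^ 2)
      ≤ Real.sqrt (∑ i, (2 * M * Real.exp (u i)) ^ 2) := Real.sqrt_le_sqrt hsum
    _ = 2 * Real.sqrt (∑ i, Real.exp (u i) ^ 2) * M := by
        have : ∑ i, (2 * M * Real.exp (u i)) ^ 2
            = (2 * M) ^ 2 * ∑ i, Real.exp (u i) ^ 2 := by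
          rw [Finset.mul_sum]; congr 1; ext i; ring
        rw [this, Real.sqrt_mul (sq_nonneg _), Real.sqrt_sq (by positivity)]
        ring
end

section
/- Let A be a real n×d matrix, α(x) := ⟨exp(Ax), 1_n⟩, and f(x) := α(x)^{-1} · exp(Ax). Then for each i, j ∈ [d], the second partial derivative of α(x)^{-1} satisfies ∂²(α(x)^{-1})/∂x_i ∂x_j = 2 α(x)^{-1} ⟨f(x), A_{*,i}⟩ ⟨f(x), A_{*,j}⟩ − α(x)^{-1} ⟨f(x), A_{*,i} ∘ A_{*,j}⟩. -/
open Matrix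

/-- The Euclidean inner product on ℝ^n. -/
noncomputable def dotp {n : ℕ} (u v : Fin n → ℝ) : ℝ := ∑ i, u i * v i

/-- The normalization factor α(x) = ⟨exp(Ax), 1_n⟩. -/
noncomputable def alphaFn {n d : ℕ} (A : Matrix (Fin n) (Fin d) ℝ) (x : Fin d → ℝ) : ℝ :=
  ∑ i, Real.exp (A.mulVec x i)

/-- The softmax function f(x) = α(x)⁻¹ · exp(Ax). -/
noncomputable def softmaxFn {n d : ℕ} (A : Matrix (Fin n) (Fin d) ℝ) (x : Fin d → ℝ) :
    Fin n → ℝ :=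
  (alphaFn A x)⁻¹ • fun i => Real.exp (A.mulVec x i)

/-!
Write `M_c(x) = ⟨exp(Ax), c⟩`. Then `α = M_1`, `⟨f(x), c⟩ = α(x)⁻¹ M_c(x)`, and differentiating
under the sum gives `∂_j M_c = M_{A_{*,j} ∘ c}`. The claim is therefore the second-order quotient
rule `∂_i ∂_j (1/g) = 2 g⁻³ ∂_i g ∂_j g - g⁻² ∂_i ∂_j g` for `g = α`.
-/

section InvDeriv

variable {𝕜 E : Type*} [NontriviallyNormedField 𝕜] [NormedAddCommGroup E] [NormedSpace 𝕜 E]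
  {g : E → 𝕜}

theorem fderiv_inv_apply {x : E} (hg : DifferentiableAt 𝕜 g x) (hx : g x ≠ 0) (v : E) :
    fderiv 𝕜 (fun y => (g y)⁻¹) x v = -(g x ^ 2)⁻¹ * fderiv 𝕜 g x v := by
  rw [HasFDerivAt.fderiv (f := fun y => (g y)⁻¹)
    ((hasDerivAt_inv hx).comp_hasFDerivAt x hg.hasFDerivAt)]
  simp

theorem fderiv_fderiv_inv_apply (hg : Differentiable 𝕜 g) (hg0 : ∀ y, g y ≠ 0) {x : E} {v : E}
    (hg' : DifferentiableAt 𝕜 (fun y => fderiv 𝕜 g y v) x) (w : E) :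
    fderiv 𝕜 (fun y => fderiv 𝕜 (fun z => (g z)⁻¹) y v) x w =
      2 * (g x)⁻¹ ^ 3 * fderiv 𝕜 g x w * fderiv 𝕜 g x v
        - (g x ^ 2)⁻¹ * fderiv 𝕜 (fun y => fderiv 𝕜 g y v) x w := by
  have hfirst : (fun y => fderiv 𝕜 (fun z => (g z)⁻¹) y v) =
      fun y => -(g y ^ 2)⁻¹ * fderiv 𝕜 g y v :=
    funext fun y => fderiv_inv_apply (hg y) (hg0 y) v
  have hsq : DifferentiableAt 𝕜 (fun y => g y ^ 2) x := (hg x).pow 2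
  have hsq0 : g x ^ 2 ≠ 0 := pow_ne_zero 2 (hg0 x)
  rw [hfirst, fderiv_fun_mul (hsq.fun_inv hsq0).fun_neg hg', fderiv_fun_neg]
  simp only [_root_.add_apply, _root_.smul_apply, _root_.neg_apply, smul_eq_mul]
  rw [fderiv_inv_apply hsq hsq0, fderiv_fun_pow 2 (hg x)]
  simp only [_root_.smul_apply, nsmul_eq_mul, smul_eq_mul]
  field_simp [hg0 x]
  ring

end InvDeriv

section ExpInner

variable {m ι : Type*} [Fintype m] [Fintype ι] (A : Matrix m ι ℝ)

noncomputable def expInner (c : m → ℝ) (z : ι → ℝ) : ℝ :=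
  ∑ k, Real.exp ((A *ᵥ z) k) * c k

noncomputable def rowCLM (k : m) : (ι → ℝ) →L[ℝ] ℝ :=
  (ContinuousLinearMap.proj k).comp (LinearMap.toContinuousLinearMap A.mulVecLin)

theorem hasFDerivAt_expInner (c : m → ℝ) (x : ι → ℝ) :
    HasFDerivAt (expInner A c) (∑ k, c k • Real.exp ((A *ᵥ x) k) • rowCLM A k) x :=
  HasFDerivAt.fun_sum fun k _ => ((rowCLM A k).hasFDerivAt.exp).mul_const (c k)

theorem differentiable_expInner (c : m → ℝ) : Differentiable ℝ (expInner A c) :=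
  fun x => (hasFDerivAt_expInner A c x).differentiableAt

theorem fderiv_expInner_apply_single [DecidableEq ι] (c : m → ℝ) (x : ι → ℝ) (j : ι) :
    fderiv ℝ (expInner A c) x (Pi.single j 1) = expInner A ((fun k => A k j) * c) x := by
  rw [(hasFDerivAt_expInner A c x).fderiv]
  simp only [expInner, rowCLM, _root_.sum_apply, _root_.smul_apply, ContinuousLinearMap.comp_apply,
    LinearMap.coe_toContinuousLinearMap', mulVecBilin_apply, mulVec_single_one,
    ContinuousLinearMap.proj_apply, col_apply, smul_eq_mul, Pi.mul_apply]
  exact Finset.sum_congr rfl fun k _ => by ring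

end ExpInner

section Softmax

variable {n d : ℕ} (A : Matrix (Fin n) (Fin d) ℝ)

theorem alphaFn_eq_expInner : alphaFn A = expInner A 1 := by
  ext x
  simp [alphaFn, expInner]

theorem alphaFn_pos [NeZero n] (x : Fin d → ℝ) : 0 < alphaFn A x :=
  Finset.sum_pos (fun _ _ => Real.exp_pos _) Finset.univ_nonempty

theorem dotp_softmaxFn (x : Fin d → ℝ) (c : Fin n → ℝ) :
    dotp (softmaxFn A x) c = (alphaFn A x)⁻¹ * expInner A c x := by
  simp [dotp, softmaxFn, expInner, Finset.mul_sum, mul_assoc]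

end Softmax

/-- ∂²(α(x)⁻¹)/∂x_i ∂x_j
    = 2 α(x)⁻¹ ⟨f(x), A_{*,i}⟩ ⟨f(x), A_{*,j}⟩ − α(x)⁻¹ ⟨f(x), A_{*,i} ∘ A_{*,j}⟩. -/
theorem stmt_4 {n d : ℕ} (A : Matrix (Fin n) (Fin d) ℝ) (x : Fin d → ℝ) (i j : Fin d) :
    fderiv ℝ (fun y => fderiv ℝ (fun z => (alphaFn A z)⁻¹) y (Pi.single j 1)) x
        (Pi.single i 1) =
      2 * (alphaFn A x)⁻¹ * dotp (softmaxFn A x) (fun k => A k i)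
          * dotp (softmaxFn A x) (fun k => A k j)
        - (alphaFn A x)⁻¹
          * dotp (softmaxFn A x) ((fun k => A k i) * fun k => A k j) := by
  rcases eq_zero_or_neZero n with rfl | _
  · -- `α ≡ 0`, and both sides vanish because `0⁻¹ = 0`
    simp [alphaFn, dotp]
  have hpartial (l : Fin d) (y : Fin d → ℝ) :
      fderiv ℝ (alphaFn A) y (Pi.single l 1) = expInner A (fun k => A k l) y := by
    rw [alphaFn_eq_expInner, fderiv_expInner_apply_single, mul_one]
  have hdiff : Differentiable ℝ (alphaFn A) := by
    rw [alphaFn_eq_expInner]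
    exact differentiable_expInner A 1
  rw [fderiv_fderiv_inv_apply hdiff (fun y => (alphaFn_pos A y).ne')
      (funext (hpartial j) ▸ differentiable_expInner A _ x),
    funext (hpartial j), hpartial, hpartial, fderiv_expInner_apply_single,
    dotp_softmaxFn, dotp_softmaxFn, dotp_softmaxFn]
  ring
end

section
/- Let f, b ∈ ℝ^n be entrywise nonnegative vectors with ‖f‖_1 = 1 and ‖b‖_1 ≤ 1. Define B := ⟨3f − 2b, f⟩ · f f^⊤ + (b ∘ f) f^⊤ + f (b ∘ f)^⊤ + ⟨f − b, f⟩ · diag(f) + diag((2f − b) ∘ f). Then −4 I_n ⪯ B ⪯ 8 I_n in the positive semidefinite (Loewner) order. -/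
/-!
Write `s = ⟨f, x⟩` for the `f`-mean of `x`. In the quadratic form `xᵀ B x` the terms involving `b`
other than `⟨b, f⟩` combine into `-∑ bᵢ fᵢ (xᵢ - s)²`, a `b ∘ f`-weighted variance, which is at most
the `f`-variance `∑ fᵢ xᵢ² - s²` because `bᵢ ≤ 1`. What remains is a combination of `s²`,
`∑ fᵢ xᵢ²` and `∑ fᵢ² xᵢ²`, all between `0` and `‖x‖²`, with coefficients built from
`⟨f, f⟩, ⟨b, f⟩ ∈ [0, 1]`; this even gives `-2 ‖x‖² ≤ xᵀ B x ≤ 6 ‖x‖²`.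
-/

open Matrix

/-- The ℓ1 norm of a vector in ℝ^n. -/
noncomputable def l1norm {n : ℕ} (u : Fin n → ℝ) : ℝ := ∑ i, |u i|

namespace Matrix

variable {ι R : Type*} [Fintype ι]

theorem dotProduct_vecMulVec_mulVec [CommSemiring R] (u v x : ι → R) :
    x ⬝ᵥ (vecMulVec u v *ᵥ x) = (x ⬝ᵥ u) * (v ⬝ᵥ x) := by
  rw [vecMulVec_mulVec, op_smul_eq_smul, dotProduct_smul, smul_eq_mul, mul_comm]

theorem dotProduct_diagonal_mulVec [CommSemiring R] [DecidableEq ι] (d x : ι → R) :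
    x ⬝ᵥ (diagonal d *ᵥ x) = ∑ i, d i * x i ^ 2 := by
  simp only [dotProduct, mulVec_diagonal]
  exact Finset.sum_congr rfl fun i _ => by ring

variable [DecidableEq ι]

theorem posSemidef_sub_smul_one_of_le {A : Matrix ι ι ℝ} (hA : A.IsHermitian) {c : ℝ}
    (h : ∀ x, c * (x ⬝ᵥ x) ≤ x ⬝ᵥ (A *ᵥ x)) : (A - c • 1).PosSemidef := by
  refine .of_dotProduct_mulVec_nonneg (hA.sub (isHermitian_one.smul (.all c))) fun x => ?_
  rw [star_trivial, sub_mulVec, dotProduct_sub, smul_mulVec, one_mulVec, dotProduct_smul,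
    smul_eq_mul, sub_nonneg]
  exact h x

theorem posSemidef_smul_one_sub_of_le {A : Matrix ι ι ℝ} (hA : A.IsHermitian) {c : ℝ}
    (h : ∀ x, x ⬝ᵥ (A *ᵥ x) ≤ c * (x ⬝ᵥ x)) : (c • 1 - A).PosSemidef := by
  refine .of_dotProduct_mulVec_nonneg ((isHermitian_one.smul (.all c)).sub hA) fun x => ?_
  rw [star_trivial, sub_mulVec, dotProduct_sub, smul_mulVec, one_mulVec, dotProduct_smul,
    smul_eq_mul, sub_nonneg]
  exact h x

end Matrix

section

variable {ι : Type*} [Fintype ι]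

theorem sum_mul_sub_sq (w x : ι → ℝ) (c : ℝ) :
    ∑ i, w i * (x i - c) ^ 2 = ∑ i, w i * x i ^ 2 - 2 * c * (w ⬝ᵥ x) + c ^ 2 * ∑ i, w i := by
  simp only [dotProduct, Finset.mul_sum, ← Finset.sum_sub_distrib, ← Finset.sum_add_distrib]
  exact Finset.sum_congr rfl fun i _ => by ring

theorem sum_mul_sub_dotProduct_sq {w : ι → ℝ} (hw : ∑ i, w i = 1) (x : ι → ℝ) :
    ∑ i, w i * (x i - w ⬝ᵥ x) ^ 2 = ∑ i, w i * x i ^ 2 - (w ⬝ᵥ x) ^ 2 := by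
  rw [sum_mul_sub_sq, hw]
  ring

variable [DecidableEq ι]

noncomputable def bMatrix (f b : ι → ℝ) : Matrix ι ι ℝ :=
  (((3 : ℝ) • f - (2 : ℝ) • b) ⬝ᵥ f) • vecMulVec f f + vecMulVec (b * f) f
    + vecMulVec f (b * f) + ((f - b) ⬝ᵥ f) • diagonal f + diagonal (((2 : ℝ) • f - b) * f)

theorem bMatrix_isHermitian (f b : ι → ℝ) : (bMatrix f b).IsHermitian := by
  rw [isHermitian_iff_isSymm]
  refine IsSymm.ext fun i j => ?_
  rcases eq_or_ne i j with rfl | hij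
  · rfl
  · simp [bMatrix, vecMulVec_apply, diagonal_apply_ne _ hij, diagonal_apply_ne _ hij.symm]
    ring

theorem dotProduct_bMatrix_mulVec (f b x : ι → ℝ) :
    x ⬝ᵥ (bMatrix f b *ᵥ x) = (3 * (f ⬝ᵥ f) - b ⬝ᵥ f) * (f ⬝ᵥ x) ^ 2
      + ((f - b) ⬝ᵥ f) * ∑ i, f i * x i ^ 2 + 2 * ∑ i, f i ^ 2 * x i ^ 2
      - ∑ i, b i * f i * (x i - f ⬝ᵥ x) ^ 2 := by
  have hdiag : ∑ i, (((2 : ℝ) • f - b) * f) i * x i ^ 2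
      = 2 * ∑ i, f i ^ 2 * x i ^ 2 - ∑ i, b i * f i * x i ^ 2 := by
    rw [Finset.mul_sum, ← Finset.sum_sub_distrib]
    refine Finset.sum_congr rfl fun i _ => ?_
    simp only [Pi.mul_apply, Pi.sub_apply, Pi.smul_apply, smul_eq_mul]
    ring
  rw [sum_mul_sub_sq]
  simp only [bMatrix, add_mulVec, smul_mulVec, dotProduct_add, dotProduct_smul,
    dotProduct_vecMulVec_mulVec, dotProduct_diagonal_mulVec, hdiag, sub_dotProduct,
    smul_dotProduct, smul_eq_mul]
  rw [dotProduct_comm x f, dotProduct_comm x (b * f)]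
  change _ = _ - (_ - 2 * _ * ((b * f) ⬝ᵥ x) + _ * (b ⬝ᵥ f))
  ring

theorem dotProduct_bMatrix_mulVec_mem_Icc {f b : ι → ℝ} (hf : ∀ i, 0 ≤ f i)
    (hf1 : ∑ i, f i = 1) (hb : ∀ i, 0 ≤ b i) (hb1 : ∀ i, b i ≤ 1) (x : ι → ℝ) :
    x ⬝ᵥ (bMatrix f b *ᵥ x) ∈ Set.Icc (-2 * (x ⬝ᵥ x)) (6 * (x ⬝ᵥ x)) := by
  have hf_le (i : ι) : f i ≤ 1 := hf1 ▸ Finset.single_le_sum (fun j _ => hf j) (Finset.mem_univ i)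
  set s := f ⬝ᵥ x
  set Q := ∑ i, f i * x i ^ 2
  set R := ∑ i, f i ^ 2 * x i ^ 2
  set W := ∑ i, b i * f i * (x i - s) ^ 2
  have hp0 : 0 ≤ f ⬝ᵥ f := Finset.sum_nonneg fun i _ => mul_nonneg (hf i) (hf i)
  have hp1 : f ⬝ᵥ f ≤ 1 :=
    hf1 ▸ Finset.sum_le_sum fun i _ => mul_le_of_le_one_left (hf i) (hf_le i)
  have hq0 : 0 ≤ b ⬝ᵥ f := Finset.sum_nonneg fun i _ => mul_nonneg (hb i) (hf i)
  have hq1 : b ⬝ᵥ f ≤ 1 :=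
    hf1 ▸ Finset.sum_le_sum fun i _ => mul_le_of_le_one_left (hf i) (hb1 i)
  have hW0 : 0 ≤ W := Finset.sum_nonneg fun i _ =>
    mul_nonneg (mul_nonneg (hb i) (hf i)) (sq_nonneg _)
  have hWV : W ≤ Q - s ^ 2 := sum_mul_sub_dotProduct_sq hf1 x ▸ Finset.sum_le_sum fun i _ =>
    mul_le_mul_of_nonneg_right (mul_le_of_le_one_left (hf i) (hb1 i)) (sq_nonneg _)
  have hR0 : 0 ≤ R := Finset.sum_nonneg fun i _ => by positivity
  have hRQ : R ≤ Q := Finset.sum_le_sum fun i _ => mul_le_mul_of_nonneg_right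
    (by rw [sq]; exact mul_le_of_le_one_left (hf i) (hf_le i)) (sq_nonneg _)
  have hQX : Q ≤ x ⬝ᵥ x := Finset.sum_le_sum fun i _ => by
    rw [← sq]; exact mul_le_of_le_one_left (sq_nonneg _) (hf_le i)
  rw [dotProduct_bMatrix_mulVec, sub_dotProduct]
  constructor
  · nlinarith [mul_nonneg hp0 (sq_nonneg s), mul_le_of_le_one_left (sq_nonneg s) hq1,
      mul_le_of_le_one_left (hW0.trans hWV) hq1]
  · nlinarith

end

/-- −4 I_n ⪯ B ⪯ 8 I_n where
B = ⟨3f − 2b, f⟩ f f^⊤ + (b ∘ f) f^⊤ + f (b ∘ f)^⊤ + ⟨f − b, f⟩ diag(f)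
    + diag((2f − b) ∘ f). -/
theorem stmt_13 {n : ℕ} (f b : Fin n → ℝ) (hf : ∀ i, 0 ≤ f i) (hb : ∀ i, 0 ≤ b i)
    (hf1 : l1norm f = 1) (hb1 : l1norm b ≤ 1) :
    (((dotp ((3 : ℝ) • f - (2 : ℝ) • b) f) • Matrix.vecMulVec f f
        + Matrix.vecMulVec (b * f) f + Matrix.vecMulVec f (b * f)
        + (dotp (f - b) f) • Matrix.diagonal f
        + Matrix.diagonal (((2 : ℝ) • f - b) * f))
      - (-(4 : ℝ)) • (1 : Matrix (Fin n) (Fin n) ℝ)).PosSemidef ∧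
    ((8 : ℝ) • (1 : Matrix (Fin n) (Fin n) ℝ)
      - ((dotp ((3 : ℝ) • f - (2 : ℝ) • b) f) • Matrix.vecMulVec f f
        + Matrix.vecMulVec (b * f) f + Matrix.vecMulVec f (b * f)
        + (dotp (f - b) f) • Matrix.diagonal f
        + Matrix.diagonal (((2 : ℝ) • f - b) * f))).PosSemidef := by
  have hf_sum : ∑ i, f i = 1 :=
    hf1 ▸ Finset.sum_congr rfl fun i _ => (abs_of_nonneg (hf i)).symm
  have hb_le (i : Fin n) : b i ≤ 1 :=
    (le_abs_self _).trans <|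
      (Finset.single_le_sum (fun j _ => abs_nonneg (b j)) (Finset.mem_univ i)).trans hb1
  have hbounds := dotProduct_bMatrix_mulVec_mem_Icc hf hf_sum hb hb_le
  have hx (x : Fin n → ℝ) : 0 ≤ x ⬝ᵥ x := by simpa using dotProduct_self_star_nonneg x
  exact ⟨posSemidef_sub_smul_one_of_le (bMatrix_isHermitian f b) fun x => by
      linarith [(hbounds x).1, hx x],
    posSemidef_smul_one_sub_of_le (bMatrix_isHermitian f b) fun x => by
      linarith [(hbounds x).2, hx x]⟩
end
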